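/- Properties of the phase-retrieval parallel map. Let α > 0, β ≥ 0, set φ = arctan(β/α), and define F₀(α, β) = 1 − (2φ − sin(2φ))/π. Then: (a) max(1 − 4φ³/(3π), 0) ≤ F₀(α, β) ≤ 1, and if moreover β/α ≤ 1/5 then 1 − F₀(α, β) ≥ (2/5)·φ³; (b) if β/α ≥ 2 and β ≤ 1, then F₀(α, β) ≥ 1.06·α. -/

import Mathlib

open Real

lemma sub_cube_le_sin {x : ℝ} (hx : 0 ≤ x) : x - x ^ 3 / 6 ≤ Real.sin x := by
  have hmono : Monotone (fun y : ℝ => Real.sin y - (y - y ^ 3 / 6)) := by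
    apply monotone_of_hasDerivAt_nonneg (f' := fun y => Real.cos y - (1 - y ^ 2 / 2))
    · intro y
      have h1 := (Real.hasDerivAt_sin y).sub
        ((hasDerivAt_id y).sub ((hasDerivAt_pow 3 y).div_const 6))
      exact h1.congr_deriv (by push_cast; ring)
    · intro y
      simp only [Pi.zero_apply, sub_nonneg]
      exact Real.one_sub_sq_div_two_le_cos
  have := hmono hx
  simpa using this

lemma cos_le_quartic {x : ℝ} (hx : 0 ≤ x) : Real.cos x ≤ 1 - x ^ 2 / 2 + x ^ 4 / 24 := by
  have hmono : MonotoneOn (fun y : ℝ => 1 - y ^ 2 / 2 + y ^ 4 / 24 - Real.cos y) (Set.Ici 0) := by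
    apply monotoneOn_of_hasDerivWithinAt_nonneg (convex_Ici 0)
      (f' := fun y => Real.sin y - (y - y ^ 3 / 6))
    · fun_prop
    · intro y _
      have h1 : HasDerivAt (fun y : ℝ => 1 - y ^ 2 / 2 + y ^ 4 / 24 - Real.cos y)
          (Real.sin y - (y - y ^ 3 / 6)) y := by
        have := (((hasDerivAt_const y (1:ℝ)).sub ((hasDerivAt_pow 2 y).div_const 2)).add
          ((hasDerivAt_pow 4 y).div_const 24)).sub (Real.hasDerivAt_cos y)
        exact this.congr_deriv (by push_cast; ring)
      exact h1.hasDerivWithinAt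
    · intro y hy
      rw [interior_Ici] at hy
      simpa using sub_cube_le_sin (le_of_lt hy)
  have := hmono (Set.self_mem_Ici) (Set.mem_Ici.mpr hx) hx
  simpa using this

lemma sin_le_quintic {x : ℝ} (hx : 0 ≤ x) : Real.sin x ≤ x - x ^ 3 / 6 + x ^ 5 / 120 := by
  have hmono : MonotoneOn (fun y : ℝ => y - y ^ 3 / 6 + y ^ 5 / 120 - Real.sin y) (Set.Ici 0) := by
    apply monotoneOn_of_hasDerivWithinAt_nonneg (convex_Ici 0)
      (f' := fun y => 1 - y ^ 2 / 2 + y ^ 4 / 24 - Real.cos y)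
    · fun_prop
    · intro y _
      have h1 : HasDerivAt (fun y : ℝ => y - y ^ 3 / 6 + y ^ 5 / 120 - Real.sin y)
          (1 - y ^ 2 / 2 + y ^ 4 / 24 - Real.cos y) y := by
        have := (((hasDerivAt_id y).sub ((hasDerivAt_pow 3 y).div_const 6)).add
          ((hasDerivAt_pow 5 y).div_const 120)).sub (Real.hasDerivAt_sin y)
        exact this.congr_deriv (by push_cast; ring)
      exact h1.hasDerivWithinAt
    · intro y hy
      rw [interior_Ici] at hy
      simpa using cos_le_quartic (le_of_lt hy)
  have := hmono (Set.self_mem_Ici) (Set.mem_Ici.mpr hx) hx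
  simpa using this

lemma arctan_half_le : Real.arctan (1 / 2) ≤ 0.48 := by
  have hpi : (3.141592 : ℝ) < π := Real.pi_gt_d6
  have hc : (0:ℝ) < Real.cos 0.48 := by
    apply Real.cos_pos_of_mem_Ioo
    constructor <;> norm_num <;> linarith
  have hs : (0.48 : ℝ) - 0.48 ^ 3 / 6 ≤ Real.sin 0.48 := sub_cube_le_sin (by norm_num)
  have hcu : Real.cos 0.48 ≤ 1 - (0.48:ℝ) ^ 2 / 2 + 0.48 ^ 4 / 24 := cos_le_quartic (by norm_num)
  have htan : (1/2 : ℝ) ≤ Real.tan 0.48 := by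
    rw [Real.tan_eq_sin_div_cos, le_div_iff₀ hc]
    nlinarith
  calc Real.arctan (1/2) ≤ Real.arctan (Real.tan 0.48) := Real.arctan_strictMono.monotone htan
    _ = 0.48 := Real.arctan_tan (by linarith) (by linarith)


/-- The phase-retrieval parallel map `F₀(α, β) = 1 − (2φ − sin 2φ)/π`, `φ = arctan(β/α)`. -/
noncomputable def F0 (α β : ℝ) : ℝ :=
  1 - (2 * Real.arctan (β / α) - Real.sin (2 * Real.arctan (β / α))) / Real.pi

set_option maxHeartbeats 1600000 in
/-- Properties of the phase-retrieval parallel map. -/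
theorem pr_parallel_map_properties (α β : ℝ) (hα : 0 < α) (hβ : 0 ≤ β) :
    (max (1 - 4 * Real.arctan (β / α) ^ 3 / (3 * Real.pi)) 0 ≤ F0 α β ∧
      F0 α β ≤ 1 ∧
      (β / α ≤ 1 / 5 → 1 - F0 α β ≥ 2 / 5 * Real.arctan (β / α) ^ 3)) ∧
    (β / α ≥ 2 → β ≤ 1 → F0 α β ≥ 1.06 * α) := by
  have hπ : (0:ℝ) < π := Real.pi_pos
  have hπlt : π < 3.141593 := Real.pi_lt_d6
  have hπgt : (3.141592:ℝ) < π := Real.pi_gt_d6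
  set φ := Real.arctan (β / α) with hφdef
  have hφ0 : 0 ≤ φ := by
    have := Real.arctan_strictMono.monotone (div_nonneg hβ hα.le)
    rw [Real.arctan_zero] at this; exact this
  have hφlt : φ < π / 2 := Real.arctan_lt_pi_div_two _
  have hF0 : F0 α β = 1 - (2 * φ - Real.sin (2 * φ)) / π := rfl
  clear_value φ
  have hsin_le : Real.sin (2 * φ) ≤ 2 * φ := Real.sin_le (by linarith)
  have hsin_ge : 2 * φ - (2 * φ) ^ 3 / 6 ≤ Real.sin (2 * φ) := sub_cube_le_sin (by linarith)
  have hsin_nn : 0 ≤ Real.sin (2 * φ) :=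
    Real.sin_nonneg_of_nonneg_of_le_pi (by linarith) (by linarith)
  refine ⟨⟨?_, ?_, ?_⟩, ?_⟩
  · -- max bound
    apply max_le
    · -- 1 - 4φ³/(3π) ≤ F0
      rw [hF0]
      have h1 : (2 * φ - Real.sin (2 * φ)) / π ≤ (4 * φ ^ 3 / 3) / π := by
        gcongr
        nlinarith
      have h2 : (4 * φ ^ 3 / 3) / π = 4 * φ ^ 3 / (3 * π) := by ring
      linarith
    · -- 0 ≤ F0
      rw [hF0]
      have h1 : (2 * φ - Real.sin (2 * φ)) / π ≤ 1 := by
        rw [div_le_one hπ]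
        linarith
      linarith
  · rw [hF0]
    have h1 : 0 ≤ (2 * φ - Real.sin (2 * φ)) / π := div_nonneg (by linarith) hπ.le
    linarith
  · -- small slope case
    intro hsmall
    have hφ5 : φ ≤ 1 / 5 := by
      rcases hφ0.eq_or_lt with h | h
      · rw [← h]; norm_num
      · have := Real.lt_tan h hφlt
        rw [hφdef, Real.tan_arctan] at this
        linarith
    have hq : Real.sin (2 * φ) ≤ 2 * φ - (2 * φ) ^ 3 / 6 + (2 * φ) ^ 5 / 120 :=
      sin_le_quintic (by linarith)
    rw [hF0]
    have : 2 / 5 * φ ^ 3 * π ≤ 2 * φ - Real.sin (2 * φ) := by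
      nlinarith [pow_nonneg hφ0 3, pow_nonneg hφ0 5, sq_nonneg φ,
        mul_le_mul_of_nonneg_left (mul_self_le_mul_self hφ0 hφ5) (pow_nonneg hφ0 3)]
    have h2 : 2 / 5 * φ ^ 3 ≤ (2 * φ - Real.sin (2 * φ)) / π := by
      rw [le_div_iff₀ hπ]
      linarith
    linarith
  · -- part (b)
    intro hab hb1
    have h2α : 2 * α ≤ β := by
      have := (le_div_iff₀ hα).mp hab
      linarith
    have hβpos : 0 < β := by linarith
    -- ε setup
    set ε := π / 2 - φ with hεdef
    clear_value ε
    have hε0 : 0 < ε := by simp [hεdef]; linarith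
    have hφ2 : Real.arctan 2 ≤ φ := by rw [hφdef]; exact Real.arctan_strictMono.monotone hab
    have hεle : ε ≤ 0.48 := by
      have hinv : Real.arctan (2:ℝ)⁻¹ = π / 2 - Real.arctan 2 := Real.arctan_inv_of_pos (by norm_num)
      have : ε ≤ π / 2 - Real.arctan 2 := by simp [hεdef]; linarith
      have h12 : ((2:ℝ)⁻¹ : ℝ) = 1/2 := by norm_num
      rw [h12] at hinv
      calc ε ≤ π / 2 - Real.arctan 2 := this
        _ = Real.arctan (1/2) := hinv.symm
        _ ≤ 0.48 := arctan_half_le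
    -- F0 in terms of ε
    have hsin2 : Real.sin (2 * φ) = Real.sin (2 * ε) := by
      have : 2 * φ = π - 2 * ε := by rw [hεdef]; ring
      rw [this, Real.sin_pi_sub]
    have hF0' : F0 α β = (2 * ε + Real.sin (2 * ε)) / π := by
      rw [hF0, hsin2, hεdef]
      field_simp
      ring
    -- α ≤ tan ε
    have hcε : 0 < Real.cos ε := Real.cos_pos_of_mem_Ioo ⟨by linarith, by linarith⟩
    have htanε : Real.tan ε = α / β := by
      rw [hεdef, Real.tan_pi_div_two_sub, hφdef, Real.tan_arctan]
      rw [inv_div]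
    have hαtan : α ≤ Real.sin ε / Real.cos ε := by
      rw [← Real.tan_eq_sin_div_cos, htanε]
      rw [le_div_iff₀ hβpos]
      nlinarith
    -- bounds
    have hs2 : 2 * ε - (2 * ε) ^ 3 / 6 ≤ Real.sin (2 * ε) := sub_cube_le_sin (by linarith)
    have hsε : Real.sin ε ≤ ε - ε ^ 3 / 6 + ε ^ 5 / 120 := sin_le_quintic hε0.le
    have hsεpos : 0 < Real.sin ε := Real.sin_pos_of_pos_of_lt_pi hε0 (by linarith [hεle, hπgt])
    have hcεlow : 1 - ε ^ 2 / 2 ≤ Real.cos ε := Real.one_sub_sq_div_two_le_cos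
    have hPnn : (0:ℝ) ≤ ε - ε ^ 3 / 6 + ε ^ 5 / 120 := hsεpos.le.trans hsε
    have e1 : 1.06 * Real.sin ε * π ≤ 1.06 * (ε - ε ^ 3 / 6 + ε ^ 5 / 120) * 3.141593 := by
      nlinarith [mul_le_mul hsε hπlt.le hπ.le hPnn]
    have e2 : (4 * ε - 4 / 3 * ε ^ 3) * (1 - ε ^ 2 / 2) ≤
        (2 * ε + Real.sin (2 * ε)) * Real.cos ε := by
      have g1 : 4 * ε - 4 / 3 * ε ^ 3 ≤ 2 * ε + Real.sin (2 * ε) := by nlinarith [hs2]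
      have g2 : (0:ℝ) ≤ 1 - ε ^ 2 / 2 := by nlinarith [hε0, hεle]
      have g3 : (0:ℝ) ≤ 2 * ε + Real.sin (2 * ε) := by nlinarith [hs2, hε0, hεle]
      exact mul_le_mul g1 hcεlow g2 g3
    have hu : (0:ℝ) ≤ 0.2304 - ε ^ 2 := by nlinarith [hε0, hεle]
    have e3 : 1.06 * (ε - ε ^ 3 / 6 + ε ^ 5 / 120) * 3.141593 ≤
        (4 * ε - 4 / 3 * ε ^ 3) * (1 - ε ^ 2 / 2) := by
      nlinarith [mul_nonneg hε0.le hu, mul_nonneg (mul_nonneg hε0.le hu) hu, hε0.le]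
    have hkey : 1.06 * (Real.sin ε / Real.cos ε) ≤ (2 * ε + Real.sin (2 * ε)) / π := by
      rw [← mul_div_assoc, div_le_div_iff₀ hcε hπ]
      linarith
    have : 1.06 * α ≤ 1.06 * (Real.sin ε / Real.cos ε) := by
      apply mul_le_mul_of_nonneg_left hαtan (by norm_num)
    rw [hF0']
    linarith
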